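/- Let T be a tent map whose critical point c has infinite orbit and let x be an endpoint of the core inverse limit X′. Then the full σ-orbit {σ^n(x) : n ∈ ℤ} is dense in the set F of folding points. Consequently, each of the σ-invariant subsets E_S, E_N, E_F (spiral, nasty, flat endpoints) is not closed in F unless it is empty or equal to F. -/

import Mathlib

open Set Filter Topology

/-- The inverse limit `lim←(K, T)`, as the space of backward orbits. -/
abbrev InvLim (T : ℝ → ℝ) (K : Set ℝ) :=
  {x : ℕ → ℝ // (∀ n, x n ∈ K) ∧ ∀ n, T (x (n + 1)) = x n}

/-- The shift homeomorphism `σ(…,x₋₁,x₀) = (…,x₋₁,x₀,T x₀)`. -/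
def shiftMap (T : ℝ → ℝ) (K : Set ℝ) (hK : Set.MapsTo T K K)
    (x : InvLim T K) : InvLim T K :=
  ⟨fun n => match n with
    | 0 => T (x.1 0)
    | (m + 1) => x.1 m,
   ⟨fun n => by
      cases n with
      | zero => exact hK (x.2.1 0)
      | succ m => exact x.2.1 m,
    fun n => by
      cases n with
      | zero => rfl
      | succ m => exact x.2.2 m⟩⟩

/-- The inverse of the shift homeomorphism. -/
def shiftInv (T : ℝ → ℝ) (K : Set ℝ) (x : InvLim T K) : InvLim T K :=
  ⟨fun n => x.1 (n + 1), ⟨fun n => x.2.1 (n + 1), fun n => x.2.2 (n + 1)⟩⟩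

/-- A subset of a topological space is an arc if it is the image of `[0,1]` under a
topological embedding. -/
def IsArc {Z : Type*} [TopologicalSpace Z] (A : Set Z) : Prop :=
  ∃ f : Set.Icc (0:ℝ) 1 → Z, Topology.IsEmbedding f ∧ Set.range f = A

/-- A point `x` is an endpoint if for any two subcontinua `A`, `B` containing `x`,
either `A ⊆ B` or `B ⊆ A`. -/
def IsEndpointPt {Z : Type*} [TopologicalSpace Z] (x : Z) : Prop :=
  ∀ A B : Set Z, IsCompact A → IsConnected A → IsCompact B → IsConnected B →
    x ∈ A → x ∈ B → A ⊆ B ∨ B ⊆ A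

/-- The ω-limit set of `c` under `T`. -/
def omegaSet (T : ℝ → ℝ) (c : ℝ) : Set ℝ :=
  {y | ∃ φ : ℕ → ℕ, StrictMono φ ∧
    Filter.Tendsto (fun n => T^[φ n] c) Filter.atTop (nhds y)}

/-- The basic arc of `x`: the closure of the set of points sharing the backward
itinerary of `x`. -/
def basicArcOf (T : ℝ → ℝ) (K : Set ℝ) (c : ℝ) (x : InvLim T K) : Set (InvLim T K) :=
  closure {y : InvLim T K | ∀ i, 1 ≤ i → y.1 i = c ∨ (c < y.1 i ↔ c < x.1 i)}


/-!
An endpoint `x` cannot have all its coordinates bounded away from the critical point: the tent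
map would then be affine near each of them, and moving `x₀` slightly while lifting it along the
same laps would sweep out an arc with `x` in its interior. So `c` is a cluster point of the
coordinates of `x`, hence so is every point of `ω(c)`, the coordinates being a backward orbit.
Finitely many coordinates of a point of `X′` are functions of the last of them, so every folding
point is a limit of `σ⁻ⁿ(x)`.

If `W ∈ {E_F, E_S, E_N}` is nonempty and closed in `F`, some point of `W` has its whole backward
orbit in `W`: for `E_F` and `E_N` any point does, these sets being `σ⁻¹`-invariant; for the
`σ`-invariant `E_S`, a cluster point of a forward orbit does. That backward orbit is dense in `F`,
so `W = F`. The `σ⁻¹`-invariance of `E_F` holds because the zeroth coordinate embeds each basic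
arc onto an interval, which forces every endpoint to be extreme in its basic arc.
-/

theorem IsEndpointPt.homeomorph {X Y : Type*} [TopologicalSpace X] [TopologicalSpace Y]
    (h : X ≃ₜ Y) {x : X} (hx : IsEndpointPt x) : IsEndpointPt (h x) := by
  intro A B hAc hA hBc hB hxA hxB
  have key := hx (h.symm '' A) (h.symm '' B) (hAc.image h.symm.continuous)
    (hA.image _ h.symm.continuous.continuousOn) (hBc.image h.symm.continuous)
    (hB.image _ h.symm.continuous.continuousOn) ⟨h x, hxA, h.symm_apply_apply x⟩
    ⟨h x, hxB, h.symm_apply_apply x⟩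
  simpa only [image_subset_image_iff h.symm.injective] using key

theorem IsEndpointPt.iterate_homeomorph {X : Type*} [TopologicalSpace X] (h : X ≃ₜ X) {x : X}
    (hx : IsEndpointPt x) (n : ℕ) : IsEndpointPt (h^[n] x) := by
  induction n with
  | zero => exact hx
  | succ n ih => rw [Function.iterate_succ_apply']; exact ih.homeomorph h

theorem IsArc.image_homeomorph {X Y : Type*} [TopologicalSpace X] [TopologicalSpace Y]
    (h : X ≃ₜ Y) {A : Set X} (hA : IsArc A) : IsArc (h '' A) := by
  obtain ⟨f, hf, rfl⟩ := hA
  exact ⟨h ∘ f, h.isEmbedding.comp hf, range_comp h f⟩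

theorem not_isEndpointPt_of_injOn {X : Type*} [TopologicalSpace X] {f : ℝ → X} {p q a : ℝ}
    (hf : ContinuousOn f (Icc p q)) (hinj : InjOn f (Icc p q)) (ha : a ∈ Ioo p q) :
    ¬ IsEndpointPt (f a) := by
  intro hend
  have hleft : Icc p a ⊆ Icc p q := Icc_subset_Icc_right ha.2.le
  have hright : Icc a q ⊆ Icc p q := Icc_subset_Icc_left ha.1.le
  rcases hend (f '' Icc p a) (f '' Icc a q) (isCompact_Icc.image_of_continuousOn (hf.mono hleft))
      ((isConnected_Icc ha.1.le).image _ (hf.mono hleft))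
      (isCompact_Icc.image_of_continuousOn (hf.mono hright))
      ((isConnected_Icc ha.2.le).image _ (hf.mono hright))
      ⟨a, ⟨ha.1.le, le_rfl⟩, rfl⟩ ⟨a, ⟨le_rfl, ha.2.le⟩, rfl⟩ with h | h
  · obtain ⟨t, ht, hft⟩ := h ⟨p, ⟨le_rfl, ha.1.le⟩, rfl⟩
    have := hinj (hright ht) (left_mem_Icc.2 (ha.1.trans ha.2).le) hft
    linarith [ht.1, ha.1]
  · obtain ⟨t, ht, hft⟩ := h ⟨q, ⟨ha.2.le, le_rfl⟩, rfl⟩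
    have := hinj (hleft ht) (right_mem_Icc.2 (ha.1.trans ha.2).le) hft
    linarith [ht.2, ha.2]

theorem exists_seq_of_subset_image {α : Type*} {f : α → α} {J : ℕ → Set α}
    (hJ : ∀ i, J i ⊆ f '' J (i + 1)) {a : α} (ha : a ∈ J 0) :
    ∃ w : ℕ → α, w 0 = a ∧ (∀ i, w i ∈ J i) ∧ ∀ i, f (w (i + 1)) = w i := by
  choose g hgJ hgf using fun i (v : J i) => hJ i v.2
  let w : ∀ i, J i := fun i => Nat.rec ⟨a, ha⟩ (fun i v => ⟨g i v, hgJ i v⟩) i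
  exact ⟨fun i => (w i).1, rfl, fun i => (w i).2, fun i => hgf i (w i)⟩

theorem exists_forall_iterate_mem_of_mapsTo {X : Type*} [TopologicalSpace X] [CompactSpace X]
    {f g : X → X} (hgf : Function.LeftInverse g f) (hg : Continuous g) {F W : Set X}
    (hF : IsClosed F) (hgF : MapsTo g F F) (hWF : W ⊆ F) (hW : closure W ∩ F ⊆ W)
    (hne : W.Nonempty) (hf : MapsTo f W W) : ∃ w, ∀ n, g^[n] w ∈ W := by
  obtain ⟨z, hz⟩ := hne
  obtain ⟨w, hw⟩ := exists_clusterPt_of_compactSpace (map (fun k => f^[k] z) atTop)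
  have hwF : w ∈ F :=
    hF.mem_of_mapClusterPt hw (Eventually.of_forall fun k => hWF (hf.iterate k hz))
  refine ⟨w, fun n => hW ⟨?_, hgF.iterate n hwF⟩⟩
  refine isClosed_closure.mem_of_mapClusterPt
    (MapClusterPt.continuousAt_comp (hg.iterate n).continuousAt hw) ?_
  filter_upwards [eventually_ge_atTop n] with k hk
  rw [Function.comp_apply, ← Nat.add_sub_cancel' hk, Function.iterate_add_apply,
    (hgf.iterate n) _]
  exact subset_closure (hf.iterate _ hz)

theorem eq_of_forall_iterate_mem {X : Type*} [TopologicalSpace X] {g : X → X} {F W : Set X}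
    {w : X} (hw : ∀ n, g^[n] w ∈ W) (hdense : F ⊆ closure (range fun n => g^[n] w))
    (hWF : W ⊆ F) (hW : closure W ∩ F ⊆ W) : W = F :=
  hWF.antisymm fun _ hy => hW ⟨closure_mono (range_subset_iff.2 hw) (hdense hy), hy⟩

namespace InvLim

variable {T : ℝ → ℝ} {K : Set ℝ}

theorem iterate_coord_add (z : InvLim T K) (n k : ℕ) : T^[k] (z.1 (n + k)) = z.1 n := by
  induction k with
  | zero => rfl
  | succ k ih => rw [Function.iterate_succ_apply, ← add_assoc, z.2.2, ih]

theorem shiftInv_iterate_coord (z : InvLim T K) (n k : ℕ) :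
    ((shiftInv T K)^[k] z).1 n = z.1 (n + k) := by
  induction k generalizing z with
  | zero => rfl
  | succ k ih => rw [Function.iterate_succ_apply, ih]; rfl

theorem shiftInv_shiftMap (hK : MapsTo T K K) (z : InvLim T K) :
    shiftInv T K (shiftMap T K hK z) = z := rfl

theorem shiftMap_shiftInv (hK : MapsTo T K K) (z : InvLim T K) :
    shiftMap T K hK (shiftInv T K z) = z := by
  ext (_ | n)
  · exact z.2.2 0
  · rfl

theorem continuous_coord (n : ℕ) : Continuous fun z : InvLim T K => z.1 n :=
  (continuous_apply n).comp continuous_subtype_val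

theorem continuous_shiftInv : Continuous (shiftInv T K) :=
  (continuous_pi fun n => continuous_coord (n + 1)).subtype_mk _

theorem continuous_shiftMap (hT : Continuous T) (hK : MapsTo T K K) :
    Continuous (shiftMap T K hK) := by
  refine (continuous_pi fun n => ?_).subtype_mk _
  cases n with
  | zero => exact hT.comp (continuous_coord 0)
  | succ n => exact continuous_coord n

def shiftHomeomorph (hT : Continuous T) (hK : MapsTo T K K) : InvLim T K ≃ₜ InvLim T K where
  toFun := shiftMap T K hK
  invFun := shiftInv T K
  left_inv := shiftInv_shiftMap hK
  right_inv := shiftMap_shiftInv hK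
  continuous_toFun := continuous_shiftMap hT hK
  continuous_invFun := continuous_shiftInv

theorem shiftInv_injective (hK : MapsTo T K K) : Function.Injective (shiftInv T K) :=
  Function.LeftInverse.injective (shiftMap_shiftInv hK)

theorem compactSpace (hT : Continuous T) (hK : IsCompact K) : CompactSpace (InvLim T K) := by
  refine isCompact_iff_compactSpace.1 ((isCompact_univ_pi fun _ => hK).of_isClosed_subset ?_
    fun x hx n _ => hx.1 n)
  have : IsClosed ({x : ℕ → ℝ | ∀ n, x n ∈ K} ∩ {x | ∀ n, T (x (n + 1)) = x n}) := by
    simp only [ofPred_forall]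
    exact (isClosed_iInter fun n => hK.isClosed.preimage (continuous_apply n)).inter
      (isClosed_iInter fun n => isClosed_eq (hT.comp (continuous_apply _)) (continuous_apply n))
  exact this

theorem exists_continuous_of_forall_mem {w : ℝ → ℕ → ℝ} (hw : ∀ k, Continuous fun t => w t k)
    {a b : ℝ} (hab : a ≤ b)
    (hmem : ∀ t ∈ Icc a b, (∀ k, w t k ∈ K) ∧ ∀ k, T (w t (k + 1)) = w t k) :
    ∃ f : ℝ → InvLim T K, Continuous f ∧ ∀ t ∈ Icc a b, (f t).1 = w t := by
  refine ⟨fun t => ⟨w (projIcc a b hab t), hmem _ (projIcc a b hab t).2⟩, ?_, fun t ht => ?_⟩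
  · exact (continuous_pi fun k => (hw k).comp
      (continuous_subtype_val.comp continuous_projIcc)).subtype_mk _
  · simp only [projIcc_of_mem hab ht]

theorem mem_closure_of_forall_coord (hT : Continuous T) {S : Set (InvLim T K)} {y : InvLim T K}
    (h : ∀ m, y.1 m ∈ closure ((fun z : InvLim T K => z.1 m) '' S)) : y ∈ closure S := by
  rw [mem_closure_iff_nhds]
  intro U hU
  obtain ⟨V, hV, hVU⟩ := (mem_nhds_induced _ _ _).1 hU
  rw [nhds_pi, Filter.mem_pi] at hV
  obtain ⟨I, hI, t, ht, hIV⟩ := hV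
  obtain ⟨m, hm⟩ := hI.bddAbove
  -- every coordinate in `I` is a continuous function of the coordinate `m`
  have hcoord : ∀ x : InvLim T K, ∀ i ∈ I, T^[m - i] (x.1 m) = x.1 i := fun x i hi => by
    simpa [Nat.add_sub_cancel' (hm hi)] using iterate_coord_add x i (m - i)
  have hG : ⋂ i ∈ I, T^[m - i] ⁻¹' t i ∈ 𝓝 (y.1 m) := (biInter_mem hI).2 fun i hi =>
    (hT.iterate _).continuousAt.preimage_mem_nhds (by rw [hcoord y i hi]; exact ht i)
  obtain ⟨_, hxG, x, hxS, rfl⟩ := mem_closure_iff_nhds.1 (h m) _ hG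
  refine ⟨x, hVU (hIV fun i hi => ?_), hxS⟩
  rw [← hcoord x i hi]
  exact mem_iInter₂.1 hxG i hi

end InvLim

section FoldingPoints

variable {T : ℝ → ℝ} {K : Set ℝ} {c : ℝ}

theorem omegaSet_eq_setOf_mapClusterPt (T : ℝ → ℝ) (c : ℝ) :
    omegaSet T c = {y | MapClusterPt y atTop fun n => T^[n] c} := by
  ext y
  constructor
  · rintro ⟨φ, hφ, hlim⟩
    exact hlim.mapClusterPt.of_comp hφ.tendsto_atTop
  · exact fun h => h.tendsto_subseq

theorem isClosed_omegaSet (T : ℝ → ℝ) (c : ℝ) : IsClosed (omegaSet T c) := by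
  rw [omegaSet_eq_setOf_mapClusterPt]
  exact isClosed_setOfPred_clusterPt

theorem mapClusterPt_apply_of_backward_orbit (hT : Continuous T) {u : ℕ → ℝ}
    (hu : ∀ n, T (u (n + 1)) = u n) {a : ℝ} (ha : MapClusterPt a atTop u) :
    MapClusterPt (T a) atTop u := by
  have hshift : MapClusterPt a atTop (u ∘ fun n => n + 1) := by
    rwa [mapClusterPt_comp, map_add_atTop_eq_nat]
  simpa [Function.comp_def, hu] using hshift.continuousAt_comp hT.continuousAt

theorem omegaSet_subset_setOf_mapClusterPt (hT : Continuous T) {u : ℕ → ℝ}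
    (hu : ∀ n, T (u (n + 1)) = u n) (hc : MapClusterPt c atTop u) :
    omegaSet T c ⊆ {a | MapClusterPt a atTop u} := by
  have horbit : ∀ n, MapClusterPt (T^[n] c) atTop u := fun n => by
    induction n with
    | zero => exact hc
    | succ n ih =>
      rw [Function.iterate_succ_apply']
      exact mapClusterPt_apply_of_backward_orbit hT hu ih
  intro y hy
  rw [omegaSet_eq_setOf_mapClusterPt] at hy
  exact isClosed_setOfPred_clusterPt.mem_of_mapClusterPt hy (Eventually.of_forall horbit)

def foldingPoints (T : ℝ → ℝ) (K : Set ℝ) (c : ℝ) : Set (InvLim T K) :=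
  {y | ∀ n, y.1 n ∈ omegaSet T c}

theorem isClosed_foldingPoints : IsClosed (foldingPoints T K c) := by
  simp only [foldingPoints, ofPred_forall]
  exact isClosed_iInter fun n => (isClosed_omegaSet T c).preimage (InvLim.continuous_coord n)

theorem mapsTo_shiftInv_foldingPoints :
    MapsTo (shiftInv T K) (foldingPoints T K c) (foldingPoints T K c) :=
  fun _ hy n => hy (n + 1)

/-- Being a backward orbit accumulating at `c`, the coordinates of `z` accumulate at every point
of `ω(c)`; and a point of the inverse limit is approximated through one large enough coordinate. -/
theorem foldingPoints_subset_closure_shiftInv_orbit (hT : Continuous T) {z : InvLim T K}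
    (hz : MapClusterPt c atTop fun n => z.1 n) :
    foldingPoints T K c ⊆ closure (range fun n => (shiftInv T K)^[n] z) := by
  intro y hy
  refine InvLim.mem_closure_of_forall_coord hT fun m => ?_
  have hym := omegaSet_subset_setOf_mapClusterPt hT z.2.2 hz (hy m)
  refine closure_mono ?_ (mapClusterPt_atTop_iff_forall_mem_closure.1 hym m)
  rintro _ ⟨n, hn, rfl⟩
  refine ⟨_, ⟨n - m, rfl⟩, ?_⟩
  simp only [InvLim.shiftInv_iterate_coord, Nat.add_sub_cancel' (mem_Ici.1 hn)]

end FoldingPoints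

section BasicArcs

variable {T : ℝ → ℝ} {K : Set ℝ} {c : ℝ}

/-- The closed half-line at `c` containing `v` (for `v = c`, the left one). -/
def sideOf (c v : ℝ) : Set ℝ := {u | u = c ∨ (c < u ↔ c < v)}

theorem sideOf_of_lt {v : ℝ} (h : c < v) : sideOf c v = Ici c := by
  ext u
  simp only [sideOf, mem_ofPred_eq, mem_Ici, iff_true_intro h, iff_true]
  constructor
  · rintro (rfl | h) <;> [exact le_rfl; exact h.le]
  · intro hu; rcases hu.eq_or_lt with h | h <;> [exact .inl h.symm; exact .inr h]

theorem sideOf_of_le {v : ℝ} (h : v ≤ c) : sideOf c v = Iic c := by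
  ext u
  simp only [sideOf, mem_ofPred_eq, mem_Iic, iff_false_intro h.not_gt, iff_false, not_lt]
  constructor
  · rintro (rfl | h) <;> [exact le_rfl; exact h]
  · intro hu; rcases hu.eq_or_lt with h | h <;> [exact .inl h; exact .inr h.le]

theorem mem_sideOf_self (c v : ℝ) : v ∈ sideOf c v := .inr Iff.rfl

theorem isClosed_sideOf (c v : ℝ) : IsClosed (sideOf c v) := by
  rcases lt_or_ge c v with h | h
  · rw [sideOf_of_lt h]; exact isClosed_Ici
  · rw [sideOf_of_le h]; exact isClosed_Iic

theorem ordConnected_sideOf (c v : ℝ) : (sideOf c v).OrdConnected := by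
  rcases lt_or_ge c v with h | h
  · rw [sideOf_of_lt h]; exact ordConnected_Ici
  · rw [sideOf_of_le h]; exact ordConnected_Iic

theorem injOn_sideOf (hl : InjOn T (Iic c)) (hr : InjOn T (Ici c)) (v : ℝ) :
    InjOn T (sideOf c v) := by
  rcases lt_or_ge c v with h | h
  · rwa [sideOf_of_lt h]
  · rwa [sideOf_of_le h]

theorem isClosed_setOf_coord_mem (S : ℕ → Set ℝ) (hS : ∀ i, IsClosed (S i)) :
    IsClosed {y : InvLim T K | ∀ i, 1 ≤ i → y.1 i ∈ S i} := by
  simp only [ofPred_forall]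
  exact isClosed_iInter fun i => isClosed_iInter fun _ =>
    (hS i).preimage (InvLim.continuous_coord i)

theorem basicArcOf_eq (z : InvLim T K) :
    basicArcOf T K c z = {y : InvLim T K | ∀ i, 1 ≤ i → y.1 i ∈ sideOf c (z.1 i)} :=
  (isClosed_setOf_coord_mem _ fun i => isClosed_sideOf c (z.1 i)).closure_eq

theorem mapsTo_shiftInv_basicArcOf (z : InvLim T K) :
    MapsTo (shiftInv T K) (basicArcOf T K c z) (basicArcOf T K c (shiftInv T K z)) := by
  rw [basicArcOf_eq, basicArcOf_eq]
  exact fun y hy i _ => hy (i + 1) (Nat.le_add_left 1 i)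

end BasicArcs

section Connectedness

variable {T : ℝ → ℝ} {K : Set ℝ}

theorem injOn_coord_zero {S : ℕ → Set ℝ} (hinj : ∀ i, InjOn T (S i)) :
    InjOn (fun y : InvLim T K => y.1 0) {y | ∀ i, 1 ≤ i → y.1 i ∈ S i} := by
  intro y hy y' hy' h0
  ext i
  induction i with
  | zero => exact h0
  | succ i ih =>
    refine hinj (i + 1) (hy _ (Nat.le_add_left 1 i)) (hy' _ (Nat.le_add_left 1 i)) ?_
    rw [y.2.2, y'.2.2]
    exact ih

theorem ordConnected_image_coord_zero (hT : Continuous T) (hK : K.OrdConnected) {E : Set ℝ}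
    {S : ℕ → Set ℝ} (hE : E.OrdConnected) (hS : ∀ i, (S i).OrdConnected) :
    ((fun y : InvLim T K => y.1 0) '' {y | y.1 0 ∈ E ∧ ∀ i, 1 ≤ i → y.1 i ∈ S i}).OrdConnected := by
  rw [ordConnected_iff_uIcc_subset]
  rintro _ ⟨y, hy, rfl⟩ _ ⟨y', hy', rfl⟩ u hu
  have hJ : ∀ i, uIcc (y.1 i) (y'.1 i) ⊆ T '' uIcc (y.1 (i + 1)) (y'.1 (i + 1)) := fun i => by
    rw [← y.2.2 i, ← y'.2.2 i]
    exact intermediate_value_uIcc hT.continuousOn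
  obtain ⟨w, rfl, hwJ, hwT⟩ := exists_seq_of_subset_image hJ hu
  exact ⟨⟨w, fun i => hK.uIcc_subset (y.2.1 i) (y'.2.1 i) (hwJ i), hwT⟩,
    ⟨hE.uIcc_subset hy.1 hy'.1 (hwJ 0), fun i hi => (hS i).uIcc_subset (hy.2 i hi) (hy'.2 i hi)
      (hwJ i)⟩, rfl⟩

theorem isPreconnected_setOf_coord_mem (hT : Continuous T) (hK : IsCompact K)
    (hKo : K.OrdConnected) {E : Set ℝ} {S : ℕ → Set ℝ} (hE : IsClosed E) (hEo : E.OrdConnected)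
    (hS : ∀ i, IsClosed (S i)) (hSo : ∀ i, (S i).OrdConnected) (hinj : ∀ i, InjOn T (S i)) :
    IsPreconnected {y : InvLim T K | y.1 0 ∈ E ∧ ∀ i, 1 ≤ i → y.1 i ∈ S i} := by
  set C := {y : InvLim T K | y.1 0 ∈ E ∧ ∀ i, 1 ≤ i → y.1 i ∈ S i}
  have := InvLim.compactSpace hT hK
  have hC : IsClosed C :=
    (hE.preimage (InvLim.continuous_coord 0)).inter (isClosed_setOf_coord_mem S hS)
  have := isCompact_iff_compactSpace.1 hC.isCompact
  have hemb : IsClosedEmbedding fun y : C => y.1.1 0 :=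
    ((InvLim.continuous_coord 0).comp continuous_subtype_val).isClosedEmbedding
      fun y y' h => Subtype.ext (injOn_coord_zero hinj y.2.2 y'.2.2 h)
  rw [isPreconnected_iff_preconnectedSpace]
  refine ⟨hemb.isInducing.isPreconnected_image.1 ?_⟩
  rw [image_univ, ← image_eq_range (fun y : InvLim T K => y.1 0)]
  exact (ordConnected_image_coord_zero hT hKo hEo hSo).isPreconnected

/-- The two halves of the basic arc of an endpoint, cut at the endpoint, are continua; one of
them must contain the other, so the endpoint is extreme in its basic arc. -/
theorem IsEndpointPt.coord_zero_eq_sSup_or_sInf (hT : Continuous T) (hK : IsCompact K)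
    (hKo : K.OrdConnected) {c : ℝ} (hl : InjOn T (Iic c)) (hr : InjOn T (Ici c))
    {z : InvLim T K} (hz : IsEndpointPt z) :
    z.1 0 = sSup ((fun w : InvLim T K => w.1 0) '' basicArcOf T K c z) ∨
      z.1 0 = sInf ((fun w : InvLim T K => w.1 0) '' basicArcOf T K c z) := by
  have := InvLim.compactSpace hT hK
  have hzL : ∀ i, 1 ≤ i → z.1 i ∈ sideOf c (z.1 i) := fun i _ => mem_sideOf_self c _
  have hhalf : ∀ E : Set ℝ, IsClosed E → E.OrdConnected → z.1 0 ∈ E →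
      IsCompact {y : InvLim T K | y.1 0 ∈ E ∧ ∀ i, 1 ≤ i → y.1 i ∈ sideOf c (z.1 i)} ∧
        IsConnected {y : InvLim T K | y.1 0 ∈ E ∧ ∀ i, 1 ≤ i → y.1 i ∈ sideOf c (z.1 i)} :=
    fun E hE hEo hzE =>
    ⟨((hE.preimage (InvLim.continuous_coord 0)).inter
        (isClosed_setOf_coord_mem _ fun i => isClosed_sideOf c _)).isCompact,
      ⟨z, hzE, hzL⟩,
      isPreconnected_setOf_coord_mem hT hK hKo hE hEo (fun i => isClosed_sideOf c _)
        (fun i => ordConnected_sideOf c _) (fun i => injOn_sideOf hl hr _)⟩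
  obtain ⟨hc₁, hC₁⟩ := hhalf (Iic (z.1 0)) isClosed_Iic ordConnected_Iic self_mem_Iic
  obtain ⟨hc₂, hC₂⟩ := hhalf (Ici (z.1 0)) isClosed_Ici ordConnected_Ici self_mem_Ici
  rw [basicArcOf_eq]
  rcases hz _ _ hc₁ hC₁ hc₂ hC₂ ⟨self_mem_Iic, hzL⟩ ⟨self_mem_Ici, hzL⟩ with h | h
  · refine .inr (IsLeast.csInf_eq ?_).symm
    refine ⟨⟨z, hzL, rfl⟩, ?_⟩
    rintro _ ⟨y, hy, rfl⟩
    exact (le_total (y.1 0) (z.1 0)).elim (fun hle => (@h y ⟨hle, hy⟩).1) id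
  · refine .inl (IsGreatest.csSup_eq ?_).symm
    refine ⟨⟨z, hzL, rfl⟩, ?_⟩
    rintro _ ⟨y, hy, rfl⟩
    exact (le_total (y.1 0) (z.1 0)).elim id (fun hge => (@h y ⟨hge, hy⟩).1)

end Connectedness

section EndpointTypes

variable {T : ℝ → ℝ} {K : Set ℝ} {c : ℝ}

def flatEndpoints (T : ℝ → ℝ) (K : Set ℝ) (c : ℝ) : Set (InvLim T K) :=
  {y | IsEndpointPt y ∧ ¬ (basicArcOf T K c y).Subsingleton ∧
    (y.1 0 = sSup ((fun w : InvLim T K => w.1 0) '' basicArcOf T K c y) ∨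
      y.1 0 = sInf ((fun w : InvLim T K => w.1 0) '' basicArcOf T K c y))}

def spiralEndpoints (T : ℝ → ℝ) (K : Set ℝ) (c : ℝ) : Set (InvLim T K) :=
  {y | IsEndpointPt y ∧ (basicArcOf T K c y).Subsingleton ∧ ∃ A : Set (InvLim T K), IsArc A ∧ y ∈ A}

def nastyEndpoints (T : ℝ → ℝ) (K : Set ℝ) : Set (InvLim T K) :=
  {y | IsEndpointPt y ∧ ∀ A : Set (InvLim T K), IsArc A → y ∉ A}

theorem mapsTo_shiftInv_flatEndpoints (hT : Continuous T) (hK : MapsTo T K K)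
    (hKc : IsCompact K) (hKo : K.OrdConnected) (hl : InjOn T (Iic c)) (hr : InjOn T (Ici c)) :
    MapsTo (shiftInv T K) (flatEndpoints T K c) (flatEndpoints T K c) := by
  rintro z ⟨hz, hnd, -⟩
  have hz' : IsEndpointPt (shiftInv T K z) := hz.homeomorph (InvLim.shiftHomeomorph hT hK).symm
  refine ⟨hz', fun hsub => hnd ?_, hz'.coord_zero_eq_sSup_or_sInf hT hKc hKo hl hr⟩
  exact (hsub.preimage (InvLim.shiftInv_injective hK)).anti (mapsTo_shiftInv_basicArcOf z)

theorem mapsTo_shiftMap_spiralEndpoints (hT : Continuous T) (hK : MapsTo T K K) :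
    MapsTo (shiftMap T K hK) (spiralEndpoints T K c) (spiralEndpoints T K c) := by
  rintro z ⟨hz, hsub, A, hA, hzA⟩
  have hbasic := mapsTo_shiftInv_basicArcOf (c := c) (shiftMap T K hK z)
  rw [InvLim.shiftInv_shiftMap] at hbasic
  exact ⟨hz.homeomorph (InvLim.shiftHomeomorph hT hK),
    (hsub.preimage (InvLim.shiftInv_injective hK)).anti hbasic,
    _, hA.image_homeomorph (InvLim.shiftHomeomorph hT hK), mem_image_of_mem _ hzA⟩

theorem mapsTo_shiftInv_nastyEndpoints (hT : Continuous T) (hK : MapsTo T K K) :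
    MapsTo (shiftInv T K) (nastyEndpoints T K) (nastyEndpoints T K) := by
  rintro z ⟨hz, hnA⟩
  refine ⟨hz.homeomorph (InvLim.shiftHomeomorph hT hK).symm, fun A hA hzA => ?_⟩
  exact hnA _ (hA.image_homeomorph (InvLim.shiftHomeomorph hT hK))
    ⟨_, hzA, InvLim.shiftMap_shiftInv hK z⟩

end EndpointTypes

section TentMap

variable {s : ℝ}

def tent (s x : ℝ) : ℝ := min (s * x) (s * (1 - x))

/-- The core `[c₂, c₁]` of the tent map with slope `s`. -/
def coreInterval (s : ℝ) : Set ℝ := Icc (s * (1 - s / 2)) (s / 2)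

theorem tent_of_le (hs : 0 ≤ s) {x : ℝ} (hx : x ≤ 1 / 2) : tent s x = s * x :=
  min_eq_left (by nlinarith)

theorem tent_of_ge (hs : 0 ≤ s) {x : ℝ} (hx : 1 / 2 ≤ x) : tent s x = s * (1 - x) :=
  min_eq_right (by nlinarith)

theorem tent_eq (hs : 0 ≤ s) (x : ℝ) : tent s x = s / 2 - s * |x - 1 / 2| := by
  rcases le_total x (1 / 2) with hx | hx
  · rw [tent_of_le hs hx, abs_of_nonpos (by linarith)]; ring
  · rw [tent_of_ge hs hx, abs_of_nonneg (by linarith)]; ring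

theorem continuous_tent (s : ℝ) : Continuous (tent s) := by
  unfold tent; fun_prop

theorem injOn_tent_Iic (hs : 0 < s) : InjOn (tent s) (Iic (1 / 2)) := fun x hx y hy h => by
  rw [tent_of_le hs.le hx, tent_of_le hs.le hy] at h
  exact mul_left_cancel₀ hs.ne' h

theorem injOn_tent_Ici (hs : 0 < s) : InjOn (tent s) (Ici (1 / 2)) := fun x hx y hy h => by
  rw [tent_of_ge hs.le hx, tent_of_ge hs.le hy] at h
  linarith [mul_left_cancel₀ hs.ne' h]

theorem Icc_iterate_tent_half (hs : 1 ≤ s) :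
    Icc ((tent s)^[2] (1 / 2)) (tent s (1 / 2)) = coreInterval s := by
  rw [Function.iterate_succ_apply', Function.iterate_one, tent_of_le (by linarith) le_rfl,
    tent_of_ge (by linarith) (by linarith)]
  simp only [coreInterval, mul_one_div]

/-- For slope `2` the critical orbit is `1/2, 1, 0, 0, …`. -/
theorem lt_two_of_injective_iterate_tent (hs : s ≤ 2)
    (hinf : Function.Injective fun n : ℕ => (tent s)^[n] (1 / 2)) : s < 2 := by
  refine hs.lt_of_ne fun h2 => ?_
  subst h2
  have := @hinf 2 3 (by norm_num [tent])
  omega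

theorem mapsTo_tent_coreInterval (hs1 : 1 ≤ s) (hs2 : s ≤ 2) :
    MapsTo (tent s) (coreInterval s) (coreInterval s) := by
  intro x ⟨hlo, hhi⟩
  rw [coreInterval, mem_Icc, tent_eq (by linarith)]
  constructor
  · rcases le_total x (1 / 2) with hx | hx
    · rw [abs_of_nonpos (by linarith)]; nlinarith
    · rw [abs_of_nonneg (by linarith)]; nlinarith
  · nlinarith [abs_nonneg (x - 1 / 2)]

noncomputable def lapSign (x : ℝ) : ℝ := if x < 1 / 2 then -1 else 1

theorem abs_lapSign (x : ℝ) : |lapSign x| = 1 := by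
  unfold lapSign; split_ifs <;> simp

/-- The inverse of `tent s` on the lap of sign `σ`, read off `tent s x = s/2 - s * |x - 1/2|`. -/
noncomputable def tentBranch (s σ u : ℝ) : ℝ := 1 / 2 + σ * (1 / 2 - u / s)

theorem tent_tentBranch (hs : 0 < s) {σ u : ℝ} (hσ : |σ| = 1) (hu : u ≤ s / 2) :
    tent s (tentBranch s σ u) = u := by
  have : 0 ≤ 1 / 2 - u / s := by rw [sub_nonneg, div_le_iff₀ hs]; linarith
  rw [tent_eq hs.le, tentBranch, add_sub_cancel_left, abs_mul, hσ, one_mul, abs_of_nonneg this]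
  field_simp
  ring

theorem tentBranch_tent (hs : 0 < s) (x : ℝ) : tentBranch s (lapSign x) (tent s x) = x := by
  rw [tent_eq hs.le, tentBranch, lapSign]
  split_ifs with hx
  · rw [abs_of_neg (by linarith)]; field_simp; ring
  · rw [abs_of_nonneg (by linarith)]; field_simp; ring

theorem abs_tentBranch_sub (hs : 0 < s) {σ : ℝ} (hσ : |σ| = 1) (u v : ℝ) :
    |tentBranch s σ u - tentBranch s σ v| = |u - v| / s := by
  have : tentBranch s σ u - tentBranch s σ v = σ * ((v - u) / s) := by
    unfold tentBranch; ring
  rw [this, abs_mul, hσ, one_mul, abs_div, abs_of_pos hs, abs_sub_comm]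

/-- The backward orbit of `t` that follows the laps of the backward orbit `z`. -/
noncomputable def tentLift (s : ℝ) (z : ℕ → ℝ) (t : ℝ) : ℕ → ℝ
  | 0 => t
  | k + 1 => tentBranch s (lapSign (z (k + 1))) (tentLift s z t k)

theorem tentLift_self (hs : 0 < s) {z : ℕ → ℝ} (hz : ∀ k, tent s (z (k + 1)) = z k) :
    ∀ k, tentLift s z (z 0) k = z k
  | 0 => rfl
  | k + 1 => by rw [tentLift, tentLift_self hs hz k, ← hz k, tentBranch_tent hs]

theorem abs_tentLift_sub_le (hs : 1 ≤ s) {z : ℕ → ℝ} (hz : ∀ k, tent s (z (k + 1)) = z k)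
    (t : ℝ) : ∀ k, |tentLift s z t k - z k| ≤ |t - z 0|
  | 0 => le_rfl
  | k + 1 => by
    have hs0 : 0 < s := by linarith
    have hstep := abs_tentBranch_sub hs0 (abs_lapSign (z (k + 1))) (tentLift s z t k) (z k)
    have hzk : tentBranch s (lapSign (z (k + 1))) (z k) = z (k + 1) := by
      rw [← hz k]; exact tentBranch_tent hs0 _
    rw [hzk] at hstep
    rw [tentLift, hstep]
    exact (div_le_self (abs_nonneg _) hs).trans (abs_tentLift_sub_le hs hz t k)

theorem continuous_tentLift (z : ℕ → ℝ) : ∀ k, Continuous fun t => tentLift s z t k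
  | 0 => continuous_id
  | k + 1 => by
    have := continuous_tentLift z k
    simp only [tentLift, tentBranch]
    fun_prop

end TentMap

section Recurrence

variable {s : ℝ}

theorem exists_margin_of_forall_le_abs (hs1 : 1 < s) (hs2 : s < 2)
    {z : InvLim (tent s) (coreInterval s)} {ε : ℝ} (hε : 0 < ε)
    (hfar : ∀ n, ε ≤ |z.1 n - 1 / 2|) :
    ∃ δ > 0, ∀ n, z.1 n ∈ Icc (s * (1 - s / 2) + δ) (s / 2 - δ) := by
  have hs0 : 0 ≤ s := by linarith
  have hupper : ∀ n, z.1 n ≤ s / 2 - s * ε := fun n => by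
    rw [← z.2.2 n, tent_eq hs0]
    nlinarith [hfar (n + 1)]
  refine ⟨min (s * ε) ((s - 1) * (s * (1 - s / 2))), lt_min (by positivity)
    (mul_pos (by linarith) (mul_pos (by linarith) (by linarith))),
    fun n => ⟨?_, by linarith [hupper n, min_le_left (s * ε) ((s - 1) * (s * (1 - s / 2)))]⟩⟩
  have hlo := (z.2.1 (n + 1)).1
  rw [← z.2.2 n]
  rcases le_total (z.1 (n + 1)) (1 / 2) with h | h
  · rw [tent_of_le hs0 h]
    nlinarith [min_le_right (s * ε) ((s - 1) * (s * (1 - s / 2)))]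
  · rw [tent_of_ge hs0 h]
    have := mul_le_mul_of_nonneg_left (hupper (n + 1)) hs0
    have : s * ε ≤ s * (s * ε) := le_mul_of_one_le_left (by positivity) hs1.le
    nlinarith [min_le_left (s * ε) ((s - 1) * (s * (1 - s / 2)))]

/-- If the coordinates of `z` stayed `ε` away from the critical point, moving `z 0` slightly and
lifting it along the laps of `z` would give an arc having `z` in its interior. -/
theorem exists_abs_coord_sub_half_lt (hs1 : 1 < s) (hs2 : s < 2)
    {z : InvLim (tent s) (coreInterval s)} (hz : IsEndpointPt z) {ε : ℝ} (hε : 0 < ε) :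
    ∃ n, |z.1 n - 1 / 2| < ε := by
  by_contra! hfar
  obtain ⟨δ, hδ, hmargin⟩ := exists_margin_of_forall_le_abs hs1 hs2 hε hfar
  have hs0 : 0 < s := by linarith
  set I := Icc (z.1 0 - δ) (z.1 0 + δ)
  have hlift : ∀ t ∈ I, ∀ k, tentLift s z.1 t k ∈ coreInterval s := fun t ht k => by
    have := abs_le.1 ((abs_tentLift_sub_le hs1.le z.2.2 t k).trans
      (abs_sub_le_iff.2 ⟨by linarith [ht.2], by linarith [ht.1]⟩))
    exact ⟨by linarith [(hmargin k).1], by linarith [(hmargin k).2]⟩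
  obtain ⟨f, hf, hfw⟩ := InvLim.exists_continuous_of_forall_mem (continuous_tentLift z.1)
    (by linarith : z.1 0 - δ ≤ z.1 0 + δ)
    fun t ht => ⟨hlift t ht, fun k => tent_tentBranch hs0 (abs_lapSign _) (hlift t ht k).2⟩
  have hf0 : ∀ t ∈ I, (f t).1 0 = t := fun t ht => by rw [hfw t ht]; rfl
  have hfz : f (z.1 0) = z :=
    Subtype.ext ((hfw _ ⟨by linarith, by linarith⟩).trans (funext (tentLift_self hs0 z.2.2)))
  refine not_isEndpointPt_of_injOn hf.continuousOn (fun t ht t' ht' h => ?_)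
    (⟨by linarith, by linarith⟩ : z.1 0 ∈ Ioo (z.1 0 - δ) (z.1 0 + δ)) (by rwa [hfz])
  rw [← hf0 t ht, ← hf0 t' ht', h]

theorem IsEndpointPt.mapClusterPt_half (hs1 : 1 < s) (hs2 : s < 2)
    {z : InvLim (tent s) (coreInterval s)} (hz : IsEndpointPt z) :
    MapClusterPt (1 / 2 : ℝ) atTop fun n => z.1 n := by
  rw [Metric.nhds_basis_ball.mapClusterPt_iff_frequently]
  intro ε hε
  rw [frequently_atTop]
  intro N
  have hzN : IsEndpointPt ((shiftInv (tent s) (coreInterval s))^[N] z) :=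
    hz.iterate_homeomorph (InvLim.shiftHomeomorph (continuous_tent s)
      (mapsTo_tent_coreInterval hs1.le hs2.le)).symm N
  obtain ⟨n, hn⟩ := exists_abs_coord_sub_half_lt hs1 hs2 hzN hε
  refine ⟨n + N, Nat.le_add_left N n, ?_⟩
  rwa [Metric.mem_ball, Real.dist_eq, ← InvLim.shiftInv_iterate_coord]

end Recurrence

/-- Let `T` be a tent map whose critical point `c` has infinite orbit
and let `x` be an endpoint of the core inverse limit `X′`.  Then the full `σ`-orbit of
`x` is dense in the set `F` of folding points.  Consequently, each of the `σ`-invariant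
sets `E_S`, `E_N`, `E_F` (spiral, nasty, flat endpoints) is not closed in `F` unless it
is empty or equal to `F`. -/
theorem stmt12 (s : ℝ) (hs : s ∈ Set.Ioc (Real.sqrt 2) 2) (T : ℝ → ℝ)
    (hT : ∀ x, T x = min (s * x) (s * (1 - x))) (c : ℝ) (hc : c = 1/2)
    (hinf : Function.Injective fun n : ℕ => T^[n] c)
    (K : Set ℝ) (hKdef : K = Set.Icc (T^[2] c) (T c)) (hK : Set.MapsTo T K K)
    (F EF ES EN : Set (InvLim T K))
    (hF : F = {y : InvLim T K | ∀ n, y.1 n ∈ omegaSet T c})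
    (hEF : EF = {y : InvLim T K | IsEndpointPt y ∧ ¬ (basicArcOf T K c y).Subsingleton ∧
      (y.1 0 = sSup ((fun w : InvLim T K => w.1 0) '' basicArcOf T K c y) ∨
       y.1 0 = sInf ((fun w : InvLim T K => w.1 0) '' basicArcOf T K c y))})
    (hES : ES = {y : InvLim T K | IsEndpointPt y ∧ (basicArcOf T K c y).Subsingleton ∧
      ∃ A : Set (InvLim T K), IsArc A ∧ y ∈ A})
    (hEN : EN = {y : InvLim T K | IsEndpointPt y ∧
      ∀ A : Set (InvLim T K), IsArc A → y ∉ A})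
    (x : InvLim T K) (hx : IsEndpointPt x) :
    F ⊆ closure {y : InvLim T K |
        ∃ n : ℕ, y = (shiftMap T K hK)^[n] x ∨ y = (shiftInv T K)^[n] x} ∧
      (∀ W : Set (InvLim T K), (W = EF ∨ W = ES ∨ W = EN) →
        W.Nonempty → W ≠ F → W ≠ closure W ∩ F) := by
  have hs1 : 1 < s := Real.one_lt_sqrt_two.trans hs.1
  obtain rfl : T = tent s := funext hT
  subst hc
  have hs2 : s < 2 := lt_two_of_injective_iterate_tent hs.2 hinf
  obtain rfl : K = coreInterval s := hKdef.trans (Icc_iterate_tent_half hs1.le)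
  subst hF hEF hES hEN
  have hcont := continuous_tent s
  have hdense : ∀ z, IsEndpointPt z → foldingPoints (tent s) (coreInterval s) (1 / 2) ⊆
      closure (range fun n => (shiftInv (tent s) (coreInterval s))^[n] z) := fun z hz =>
    foldingPoints_subset_closure_shiftInv_orbit hcont (hz.mapClusterPt_half hs1 hs2)
  refine ⟨(hdense x hx).trans (closure_mono ?_), ?_⟩
  · rintro _ ⟨n, rfl⟩
    exact ⟨n, .inr rfl⟩
  rintro W hW hne hWF hcl
  have hWsub : W ⊆ foldingPoints (tent s) (coreInterval s) (1 / 2) := hcl ▸ inter_subset_right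
  obtain ⟨w, hw⟩ : ∃ w, ∀ n, (shiftInv (tent s) (coreInterval s))^[n] w ∈ W := by
    rcases hW with rfl | rfl | rfl
    · obtain ⟨z, hz⟩ := hne
      exact ⟨z, fun n => (mapsTo_shiftInv_flatEndpoints hcont hK isCompact_Icc ordConnected_Icc
        (injOn_tent_Iic (by linarith)) (injOn_tent_Ici (by linarith))).iterate n hz⟩
    · have := InvLim.compactSpace (K := coreInterval s) hcont isCompact_Icc
      exact exists_forall_iterate_mem_of_mapsTo (InvLim.shiftInv_shiftMap hK)
        InvLim.continuous_shiftInv isClosed_foldingPoints mapsTo_shiftInv_foldingPoints hWsub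
        hcl.symm.subset hne (mapsTo_shiftMap_spiralEndpoints hcont hK)
    · obtain ⟨z, hz⟩ := hne
      exact ⟨z, fun n => (mapsTo_shiftInv_nastyEndpoints hcont hK).iterate n hz⟩
  have hwend : IsEndpointPt w := by rcases hW with rfl | rfl | rfl <;> exact (hw 0).1
  exact hWF (eq_of_forall_iterate_mem hw (hdense w hwend) hWsub hcl.symm.subset)
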